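/- For an i.i.d. sequence X₁, X₂, … of real-valued random variables with common cdf F and upper endpoint uep(F) = sup{x : F(x) < 1}, the probability that there is no record value after the n-th record (i.e., P(U(n+1) = +∞) conditioned on U(n) being finite) equals P(X = uep(F)). -/

import Mathlib

open MeasureTheory ProbabilityTheory Filter Set

/-- Time of the next strict upper record after index `k` (`⊤` if none). -/
noncomputable def nextRecord {Ω : Type*} (X : ℕ → Ω → ℝ) (ω : Ω) (k : ℕ) : ℕ∞ :=
  sInf {e : ℕ∞ | ∃ j : ℕ, e = (j : ℕ∞) ∧ k < j ∧ X k ω < X j ω}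

/-- Record times: `recordTime X n` is `U(n)` for `n ≥ 1`, with `U(1) = 1`. -/
noncomputable def recordTime {Ω : Type*} (X : ℕ → Ω → ℝ) : ℕ → Ω → ℕ∞
  | 0, _ => 1
  | 1, _ => 1
  | (n+2), ω => WithTop.recTopCoe ⊤ (fun k => nextRecord X ω k) (recordTime X (n+1) ω)

/-- Upper endpoint of a cdf `F` as an extended real (possibly `⊤`). -/
noncomputable def uepE (F : ℝ → ℝ) : EReal :=
  sSup ((fun x : ℝ => (x : EReal)) '' {x | F x < 1})

/-!
A record after index `k` fails to exist exactly when `X k` is never exceeded later. Almost surely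
this happens iff `X k = uep(F)`: nothing exceeds `uep(F)` with positive probability, and if
`X k < q < uep(F)` then `P(X ≤ q) < 1`, so by independence some later `X j` exceeds `q` almost
surely. Hence `P(U(2) = ∞) = P(X = uep(F))`. For `n ≥ 2`, finiteness of `U(n)` forces
`P(U(2) = ∞) = 0`, so `P(X = uep(F)) = 0`, and `U(n+1) = ∞` requires some index never to be
exceeded, which is then a null event.
-/

open scoped ENNReal

section RecordTimes

variable {Ω : Type*} (X : ℕ → Ω → ℝ) (ω : Ω)

lemma nextRecord_eq_top_iff (k : ℕ) :
    nextRecord X ω k = ⊤ ↔ ∀ j, k < j → X j ω ≤ X k ω := by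
  simp [nextRecord, sInf_eq_top, forall_comm (α := ℕ∞)]

lemma recordTime_two : recordTime X 2 ω = nextRecord X ω 1 := rfl

lemma recordTime_succ_eq_top {m : ℕ} (h : recordTime X m ω = ⊤) :
    recordTime X (m + 1) ω = ⊤ := by
  match m, h with
  | m + 2, h => simp only [recordTime] at h ⊢; rw [h]; rfl

lemma recordTime_eq_top_of_le {m m' : ℕ} (hm : m ≤ m') (h : recordTime X m ω = ⊤) :
    recordTime X m' ω = ⊤ := by
  induction m', hm using Nat.le_induction with
  | base => exact h
  | succ m' _ ih => exact recordTime_succ_eq_top X ω ih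

lemma exists_nextRecord_eq_top_of_recordTime_eq_top {m : ℕ} (h : recordTime X m ω = ⊤) :
    ∃ k, nextRecord X ω k = ⊤ := by
  induction m using Nat.strong_induction_on with
  | _ m ih =>
  match m, h with
  | m + 2, h =>
    simp only [recordTime] at h
    cases hr : recordTime X (m + 1) ω with
    | top => exact ih (m + 1) (by omega) hr
    | coe k => rw [hr] at h; exact ⟨k, h⟩

end RecordTimes

section Probability

variable {Ω : Type*} [MeasurableSpace Ω] {μ : Measure Ω}

lemma measurableSet_nextRecord_eq_top {X : ℕ → Ω → ℝ} (hmeas : ∀ i, Measurable (X i)) (k : ℕ) :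
    MeasurableSet {ω | nextRecord X ω k = ⊤} := by
  simp only [nextRecord_eq_top_iff, ofPred_forall]
  exact .iInter fun j => .iInter fun _ => measurableSet_le (hmeas j) (hmeas k)

lemma ProbabilityTheory.iIndepFun.measure_forall_mem_eq_zero {β : Type*} [MeasurableSpace β]
    {X : ℕ → Ω → β} (hindep : iIndepFun X μ) {S : Set β} (hS : MeasurableSet S) {c : ℝ≥0∞}
    (hc : c < 1) (hle : ∀ j, μ (X j ⁻¹' S) ≤ c) (k : ℕ) :
    μ {ω | ∀ j, k < j → X j ω ∈ S} = 0 := by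
  have hpow : ∀ m : ℕ, μ {ω | ∀ j, k < j → X j ω ∈ S} ≤ c ^ m := fun m =>
    calc μ {ω | ∀ j, k < j → X j ω ∈ S}
        ≤ μ (⋂ j ∈ Finset.Ioc k (k + m), X j ⁻¹' S) :=
          measure_mono fun ω hω => mem_iInter₂.2 fun j hj => hω j (Finset.mem_Ioc.1 hj).1
      _ = ∏ j ∈ Finset.Ioc k (k + m), μ (X j ⁻¹' S) :=
          hindep.meas_biInter fun j _ => ⟨S, hS, rfl⟩
      _ ≤ ∏ _j ∈ Finset.Ioc k (k + m), c := Finset.prod_le_prod' fun j _ => hle j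
      _ = c ^ m := by simp
  exact nonpos_iff_eq_zero.1
    (ge_of_tendsto' (ENNReal.tendsto_pow_atTop_nhds_zero_of_lt_one hc) hpow)

variable [IsProbabilityMeasure μ] {Y : Ω → ℝ} {F : ℝ → ℝ}

lemma lt_one_iff_measure_le_lt_one (hF : ∀ x, F x = (μ {ω | Y ω ≤ x}).toReal) (x : ℝ) :
    F x < 1 ↔ μ {ω | Y ω ≤ x} < 1 := by
  rw [hF, ← ENNReal.toReal_one, ENNReal.toReal_lt_toReal (measure_ne_top μ _) ENNReal.one_ne_top]

lemma measure_le_eq_one_of_uepE_lt (hF : ∀ x, F x = (μ {ω | Y ω ≤ x}).toReal) {x : ℝ}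
    (hx : uepE F < x) : μ {ω | Y ω ≤ x} = 1 :=
  le_antisymm prob_le_one <| not_lt.1 fun hlt =>
    (le_sSup ⟨x, (lt_one_iff_measure_le_lt_one hF x).2 hlt, rfl⟩ : (x : EReal) ≤ uepE F).not_gt hx

lemma measure_le_lt_one_of_lt_uepE (hF : ∀ x, F x = (μ {ω | Y ω ≤ x}).toReal) {q : ℝ}
    (hq : (q : EReal) < uepE F) : μ {ω | Y ω ≤ q} < 1 := by
  obtain ⟨_, ⟨x, (hFx : F x < 1), rfl⟩, hqx⟩ := lt_sSup_iff.1 hq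
  exact (measure_mono fun ω (hω : Y ω ≤ q) => hω.trans (EReal.coe_lt_coe_iff.1 hqx).le).trans_lt
    ((lt_one_iff_measure_le_lt_one hF x).1 hFx)

lemma measure_uepE_lt_eq_zero (hY : Measurable Y) (hF : ∀ x, F x = (μ {ω | Y ω ≤ x}).toReal) :
    μ {ω | uepE F < Y ω} = 0 := by
  have hsub : {ω | uepE F < Y ω} ⊆ ⋃ q : ℚ, ⋃ (_ : uepE F < (q : ℝ)), {ω | Y ω ≤ q}ᶜ := by
    intro ω hω
    obtain ⟨q, hq, hqY⟩ := EReal.exists_rat_btwn_of_lt hω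
    exact mem_iUnion₂.2 ⟨q, hq, not_le.2 (EReal.coe_lt_coe_iff.1 hqY)⟩
  refine measure_mono_null hsub (measure_iUnion_null fun q => measure_iUnion_null fun hq => ?_)
  rw [prob_compl_eq_zero_iff (measurableSet_le hY measurable_const)]
  exact measure_le_eq_one_of_uepE_lt hF hq

lemma measure_nextRecord_eq_top {X : ℕ → Ω → ℝ} (hmeas : ∀ i, Measurable (X i))
    (hindep : iIndepFun X μ) (hident : ∀ i, IdentDistrib (X i) Y μ μ)
    (hF : ∀ x, F x = (μ {ω | Y ω ≤ x}).toReal) (k : ℕ) :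
    μ {ω | nextRecord X ω k = ⊤} = μ {ω | (Y ω : EReal) = uepE F} := by
  have hFX : ∀ j x, F x = (μ {ω | X j ω ≤ x}).toReal := fun j x =>
    (hF x).trans (congrArg ENNReal.toReal ((hident j).measure_mem_eq measurableSet_Iic).symm)
  have hnull : ∀ j, μ {ω | uepE F < X j ω} = 0 := fun j =>
    measure_uepE_lt_eq_zero (hmeas j) (hFX j)
  refine (measure_congr (ae_eq_set.2 ⟨?_, ?_⟩)).trans
    ((hident k).measure_mem_eq (measurable_coe_real_ereal (measurableSet_singleton (uepE F))))
  · have hsub : {ω | nextRecord X ω k = ⊤} \ {ω | (X k ω : EReal) = uepE F} ⊆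
        {ω | uepE F < X k ω} ∪
          ⋃ q : ℚ, ⋃ (_ : ((q : ℝ) : EReal) < uepE F), {ω | ∀ j, k < j → X j ω ∈ Iic (q : ℝ)} := by
      rintro ω ⟨hA, hB⟩
      rw [mem_ofPred_eq, nextRecord_eq_top_iff] at hA
      rcases lt_or_gt_of_ne hB with hlt | hgt
      · obtain ⟨q, hXq, hqu⟩ := EReal.exists_rat_btwn_of_lt hlt
        exact Or.inr <| mem_iUnion₂.2
          ⟨q, hqu, fun j hj => (hA j hj).trans (EReal.coe_lt_coe_iff.1 hXq).le⟩
      · exact Or.inl hgt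
    refine measure_mono_null hsub (measure_union_null (hnull k)
      (measure_iUnion_null fun q => measure_iUnion_null fun hq => ?_))
    exact hindep.measure_forall_mem_eq_zero measurableSet_Iic
      (measure_le_lt_one_of_lt_uepE hF hq)
      (fun j => ((hident j).measure_mem_eq measurableSet_Iic).le) k
  · have hsub : {ω | (X k ω : EReal) = uepE F} \ {ω | nextRecord X ω k = ⊤} ⊆
        ⋃ j, {ω | uepE F < X j ω} := by
      rintro ω ⟨hB, hA⟩
      rw [mem_ofPred_eq, nextRecord_eq_top_iff] at hA
      push Not at hA
      obtain ⟨j, -, hlt⟩ := hA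
      exact mem_iUnion.2 ⟨j, (hB : (X k ω : EReal) = uepE F) ▸ EReal.coe_lt_coe_iff.2 hlt⟩
    exact measure_mono_null hsub (measure_iUnion_null hnull)

end Probability

theorem stmt0 {Ω : Type*} [MeasurableSpace Ω] (μ : Measure Ω) [IsProbabilityMeasure μ]
    (X : ℕ → Ω → ℝ) (hmeas : ∀ i, Measurable (X i))
    (hindep : iIndepFun X μ)
    (hident : ∀ i, Measure.map (X i) μ = Measure.map (X 1) μ)
    (F : ℝ → ℝ) (hF : ∀ x, F x = (μ {ω | X 1 ω ≤ x}).toReal)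
    (n : ℕ) (hn : 1 ≤ n)
    (hfin : μ {ω | recordTime X n ω ≠ ⊤} = 1) :
    μ {ω | recordTime X (n+1) ω = ⊤} = μ {ω | (X 1 ω : EReal) = uepE F} := by
  have hA := measure_nextRecord_eq_top hmeas hindep
    (fun i => ⟨(hmeas i).aemeasurable, (hmeas 1).aemeasurable, hident i⟩) hF
  obtain rfl | hn2 := hn.eq_or_lt
  · exact hA 1
  have hA1 : μ {ω | nextRecord X ω 1 = ⊤} = 0 := by
    rw [← prob_compl_eq_one_iff (measurableSet_nextRecord_eq_top hmeas 1)]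
    refine le_antisymm prob_le_one (hfin ▸ measure_mono fun ω hω hA1 => hω ?_)
    exact recordTime_eq_top_of_le X ω hn2 ((recordTime_two X ω).trans hA1)
  rw [← hA 1, hA1]
  refine measure_mono_null (fun ω hω => mem_iUnion.2
    (exists_nextRecord_eq_top_of_recordTime_eq_top X ω hω)) (measure_iUnion_null fun k => ?_)
  exact (hA k).trans ((hA 1).symm.trans hA1)
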